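/- Let ε > 0 and define the operators A₁, A₂ on ℂ³ by the matrices A₁ = ((0, (1+ε)/√2, 0), (0, 0, 0), (−(1+ε)/√2, 0, 0)) and A₂ = ((0, 0, (1+ε)/√2), ((1+ε)/√2, 0, 0), (0, 0, 0)). Then the operator norms ‖[(A₁+A₂)(A₁−A₂)]ⁿ‖ tend to infinity as n → ∞. -/

import Mathlib

noncomputable section

/-- The entry `(1+ε)/√2` as a complex number. -/
def cEntry (ε : ℝ) : ℂ := ((1 + ε) / Real.sqrt 2 : ℝ)

/-- The matrix `A₁` of STATEMENT 9. -/
def matA1 (ε : ℝ) : Matrix (Fin 3) (Fin 3) ℂ :=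
  !![0, cEntry ε, 0; 0, 0, 0; -(cEntry ε), 0, 0]

/-- The matrix `A₂` of STATEMENT 9. -/
def matA2 (ε : ℝ) : Matrix (Fin 3) (Fin 3) ℂ :=
  !![0, 0, cEntry ε; cEntry ε, 0, 0; 0, 0, 0]

/-! The first basis vector is an eigenvector of `(A₁+A₂)(A₁−A₂)` with eigenvalue `-(1+ε)²`, so the
`n`-th power has operator norm at least `(1+ε)²ⁿ`. -/

open Filter Matrix

namespace ContinuousLinearMap

variable {𝕜 E : Type*} [NontriviallyNormedField 𝕜] [NormedAddCommGroup E] [NormedSpace 𝕜 E]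
  {T : E →L[𝕜] E} {v : E} {μ : 𝕜}

theorem pow_apply_of_apply_eq_smul (hTv : T v = μ • v) (n : ℕ) : (T ^ n) v = μ ^ n • v := by
  induction n with
  | zero => simp
  | succ n ih => rw [pow_succ, mul_apply_eq_comp, hTv, map_smul, ih, smul_smul, ← pow_succ']

theorem norm_pow_le_opNorm_pow_of_apply_eq_smul (hv : v ≠ 0) (hTv : T v = μ • v) (n : ℕ) :
    ‖μ‖ ^ n ≤ ‖T ^ n‖ := by
  have h := (T ^ n).le_opNorm v
  rw [pow_apply_of_apply_eq_smul hTv, norm_smul, norm_pow] at h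
  exact le_of_mul_le_mul_right h (norm_pos_iff.mpr hv)

theorem tendsto_opNorm_pow_atTop_of_apply_eq_smul (hv : v ≠ 0) (hTv : T v = μ • v)
    (hμ : 1 < ‖μ‖) : Tendsto (fun n : ℕ => ‖T ^ n‖) atTop atTop :=
  tendsto_atTop_mono (norm_pow_le_opNorm_pow_of_apply_eq_smul hv hTv)
    (tendsto_pow_atTop_atTop_of_one_lt hμ)

end ContinuousLinearMap

theorem matA1_add_matA2_mul_sub_mulVec_e1 (ε : ℝ) :
    ((matA1 ε + matA2 ε) * (matA1 ε - matA2 ε)) *ᵥ ![1, 0, 0] =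
      (-(2 * cEntry ε ^ 2)) • ![1, 0, 0] := by
  ext i
  fin_cases i <;> simp [matA1, matA2, mulVec, dotProduct, Fin.sum_univ_three, mul_apply]
  ring

theorem norm_two_mul_cEntry_sq (ε : ℝ) : ‖2 * cEntry ε ^ 2‖ = (1 + ε) ^ 2 := by
  rw [norm_mul, norm_pow, cEntry, Complex.norm_real, Real.norm_eq_abs, sq_abs, div_pow,
    Real.sq_sqrt zero_le_two]
  norm_num
  ring

/-- for every `ε > 0`, the operator norms `‖[(A₁+A₂)(A₁−A₂)]ⁿ‖` of the powers of
`(A₁+A₂)(A₁−A₂)`, acting on the Hilbert space `ℂ³`, tend to infinity as `n → ∞`. -/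
theorem norm_pow_tendsto_atTop (ε : ℝ) (hε : 0 < ε) :
    Filter.Tendsto
      (fun n : ℕ =>
        ‖(Matrix.toEuclideanCLM (𝕜 := ℂ) ((matA1 ε + matA2 ε) * (matA1 ε - matA2 ε))) ^ n‖)
      Filter.atTop Filter.atTop := by
  have he₁ : WithLp.toLp 2 ![(1 : ℂ), 0, 0] ≠ 0 := by simp [← WithLp.toLp_zero]
  refine ContinuousLinearMap.tendsto_opNorm_pow_atTop_of_apply_eq_smul
    (μ := -(2 * cEntry ε ^ 2)) he₁ ?_ ?_
  · rw [Matrix.toEuclideanCLM_toLp, matA1_add_matA2_mul_sub_mulVec_e1, WithLp.toLp_smul]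
  · rw [norm_neg, norm_two_mul_cEntry_sq]
    nlinarith
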